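/- Let Ω ⊂ ℝ^m be a bounded domain with Lipschitz regular boundary, F ∈ L¹(Ω; ℝ^m), and H ∈ L^∞(Ω). Suppose u ∈ BV(Ω) is a minimizer for F̃_H with boundary trace u|_{∂Ω} = ψ ∈ L¹(∂Ω). Let φ ∈ BV(Ω) with φ|_{∂Ω} = 0, set dμ := Du + F d^m x and dν := Dφ, and write dμ = N₀|dμ| and dν = A₀|dμ| + dν_s^0 with dν_s^0 ⊥ |dμ|. Then F̃_H'(0+) = ∫_Ω N₀·A₀ |dμ| + ∫_Ω |dν_s^0| + ∫_Ω H φ d^m x ≥ 0 and F̃_H'(0−) = ∫_Ω N₀·A₀ |dμ| − ∫_Ω |dν_s^0| + ∫_Ω H φ d^m x ≤ 0. -/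

import Mathlib

open MeasureTheory Filter Set Topology Bornology
open scoped ENNReal NNReal InnerProductSpace

noncomputable section

/-- The (Euclidean) divergence of a vector field on `ℝ^m`. -/
def divg {m : ℕ} (φ : EuclideanSpace ℝ (Fin m) → EuclideanSpace ℝ (Fin m))
    (x : EuclideanSpace ℝ (Fin m)) : ℝ :=
  ∑ i, fderiv ℝ φ x (EuclideanSpace.single i 1) i

/-- The total variation `∫_Ω |Du + F d^m x|` of `u ∈ L¹(Ω)`, defined by duality:
`sup { ∫_Ω (−u div φ⃗ + F·φ⃗) : φ⃗ ∈ C¹_0(Ω), |φ⃗| ≤ 1 }`. -/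
def tvF {m : ℕ} (Ω : Set (EuclideanSpace ℝ (Fin m)))
    (F : EuclideanSpace ℝ (Fin m) → EuclideanSpace ℝ (Fin m))
    (u : EuclideanSpace ℝ (Fin m) → ℝ) : ℝ≥0∞ :=
  ⨆ (φ : EuclideanSpace ℝ (Fin m) → EuclideanSpace ℝ (Fin m)) (_ : ContDiff ℝ 1 φ)
    (_ : HasCompactSupport φ) (_ : tsupport φ ⊆ Ω) (_ : ∀ x, ‖φ x‖ ≤ 1),
    ENNReal.ofReal (∫ x in Ω, (-(u x) * divg φ x + ⟪F x, φ x⟫_ℝ))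

/-! Write `dμ_ε = dμ + ε dν = (N₀ + ε A₀) |dμ| + ε dν_s⁰`. Since `dν_s⁰ ⊥ |dμ|`, the total
variation splits as `|dμ_ε|(X) = ∫ ‖N₀ + ε A₀‖ |dμ| + |ε| |dν_s⁰|(X)`; that two densities of the
same vector measure have the same total variation is seen by comparing their Radon–Nikodym
densities with respect to a common dominating measure. Because `‖N₀‖ = 1`, the first term is
differentiable at `ε = 0` with derivative `∫ N₀·A₀ |dμ|` (dominated convergence), the second has
one-sided derivatives `±|dν_s⁰|(X)`, and the `H`-term is affine in `ε`. Finally `εφ` is an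
admissible perturbation for every `ε`, the total variation being absolutely homogeneous, so
`ε = 0` minimizes `ε ↦ F̃_H(u + εφ)`: its right derivative is `≥ 0`, its left one `≤ 0`. -/

theorem ENNReal.iSup_ofReal_mul_of_involutive {ι : Type*} {σ : ι → ι}
    (hσ : Function.Involutive σ) {L : ι → ℝ} (hL : ∀ i, L (σ i) = -L i) (c : ℝ) :
    ⨆ i, ENNReal.ofReal (c * L i) = ENNReal.ofReal |c| * ⨆ i, ENNReal.ofReal (L i) := by
  rcases le_or_gt 0 c with hc | hc
  · simp_rw [abs_of_nonneg hc, ENNReal.mul_iSup, ← ENNReal.ofReal_mul hc]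
  · rw [← hσ.surjective.iSup_comp (fun i => ENNReal.ofReal (c * L i))]
    simp_rw [hL, abs_of_neg hc, ENNReal.mul_iSup, ← ENNReal.ofReal_mul (neg_nonneg.2 hc.le),
      mul_neg, neg_mul]

section TotalVariation

variable {m : ℕ}

theorem divg_neg (ψ : EuclideanSpace ℝ (Fin m) → EuclideanSpace ℝ (Fin m))
    (x : EuclideanSpace ℝ (Fin m)) : divg (fun y => -ψ y) x = -divg ψ x := by
  simp [divg, fderiv_fun_neg]

def IsTestField (Ω : Set (EuclideanSpace ℝ (Fin m)))
    (ψ : EuclideanSpace ℝ (Fin m) → EuclideanSpace ℝ (Fin m)) : Prop :=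
  ContDiff ℝ 1 ψ ∧ HasCompactSupport ψ ∧ tsupport ψ ⊆ Ω ∧ ∀ x, ‖ψ x‖ ≤ 1

theorem IsTestField.neg {Ω : Set (EuclideanSpace ℝ (Fin m))}
    {ψ : EuclideanSpace ℝ (Fin m) → EuclideanSpace ℝ (Fin m)} (hψ : IsTestField Ω ψ) :
    IsTestField Ω fun x => -ψ x := by
  obtain ⟨hdiff, hcpt, hsupp, hle⟩ := hψ
  exact ⟨hdiff.neg, hcpt.neg, by simpa [tsupport] using hsupp, by simpa using hle⟩

theorem tvF_zero_eq_iSup (Ω : Set (EuclideanSpace ℝ (Fin m)))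
    (w : EuclideanSpace ℝ (Fin m) → ℝ) :
    tvF Ω (fun _ => 0) w =
      ⨆ ψ : {ψ // IsTestField Ω ψ}, ENNReal.ofReal (∫ x in Ω, -w x * divg ψ.1 x) := by
  simp [tvF, IsTestField, iSup_subtype, iSup_and]

theorem tvF_zero_const_mul (Ω : Set (EuclideanSpace ℝ (Fin m)))
    (w : EuclideanSpace ℝ (Fin m) → ℝ) (c : ℝ) :
    tvF Ω (fun _ => 0) (fun x => c * w x) = ENNReal.ofReal |c| * tvF Ω (fun _ => 0) w := by
  have hscale (ψ : EuclideanSpace ℝ (Fin m) → EuclideanSpace ℝ (Fin m)) :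
      ∫ x in Ω, -(c * w x) * divg ψ x = c * ∫ x in Ω, -w x * divg ψ x := by
    rw [← integral_const_mul]
    congr with x
    ring
  simp_rw [tvF_zero_eq_iSup, hscale]
  refine ENNReal.iSup_ofReal_mul_of_involutive (σ := fun ψ => ⟨fun x => -ψ.1 x, ψ.2.neg⟩)
    (fun ψ => by simp) (fun ψ => ?_) c
  simp [divg_neg, integral_neg]

/-- The zero trace of `w` is encoded as `|D(1_Ω w)|(ℝ^m) = |Dw|(Ω)`. -/
def IsTVMinimizer (Ω : Set (EuclideanSpace ℝ (Fin m)))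
    (F : EuclideanSpace ℝ (Fin m) → EuclideanSpace ℝ (Fin m))
    (H u : EuclideanSpace ℝ (Fin m) → ℝ) : Prop :=
  ∀ w : EuclideanSpace ℝ (Fin m) → ℝ, IntegrableOn w Ω →
    tvF Ω (fun _ => 0) w ≠ ⊤ →
    tvF univ (fun _ => 0) (Ω.indicator w) = tvF Ω (fun _ => 0) w →
    tvF Ω F (fun x => u x + w x) ≠ ⊤ →
    (tvF Ω F u).toReal + ∫ x in Ω, H x * u x ≤
      (tvF Ω F (fun x => u x + w x)).toReal + ∫ x in Ω, H x * (u x + w x)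

theorem IsTVMinimizer.le_add_const_mul {Ω : Set (EuclideanSpace ℝ (Fin m))}
    {F : EuclideanSpace ℝ (Fin m) → EuclideanSpace ℝ (Fin m)}
    {H u φ : EuclideanSpace ℝ (Fin m) → ℝ} (hu : IsTVMinimizer Ω F H u)
    (hφ_int : IntegrableOn φ Ω) (hφ_BV : tvF Ω (fun _ => 0) φ ≠ ⊤)
    (hφ_trace : tvF univ (fun _ => 0) (Ω.indicator φ) = tvF Ω (fun _ => 0) φ) (c : ℝ)
    (hfin : tvF Ω F (fun x => u x + c * φ x) ≠ ⊤) :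
    (tvF Ω F u).toReal + ∫ x in Ω, H x * u x ≤
      (tvF Ω F (fun x => u x + c * φ x)).toReal + ∫ x in Ω, H x * (u x + c * φ x) := by
  refine hu _ (hφ_int.const_mul c) ?_ ?_ hfin
  · rw [tvF_zero_const_mul]
    exact ENNReal.mul_ne_top ENNReal.ofReal_ne_top hφ_BV
  · rw [show Ω.indicator (fun x => c * φ x) = fun x => c * Ω.indicator φ x from
      funext (indicator_const_mul Ω φ c), tvF_zero_const_mul, tvF_zero_const_mul, hφ_trace]

end TotalVariation

section VectorMeasureDensity

variable {α E : Type*} [MeasurableSpace α] [NormedAddCommGroup E] [NormedSpace ℝ E]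
  [CompleteSpace E]

theorem integral_norm_eq_of_forall_setIntegral_eq {μ ν : Measure α} [SigmaFinite μ]
    [SigmaFinite ν] {f g : α → E} (hf : Integrable f μ) (hg : Integrable g ν)
    (h : ∀ s, MeasurableSet s → ∫ x in s, f x ∂μ = ∫ x in s, g x ∂ν) :
    ∫ x, ‖f x‖ ∂μ = ∫ x, ‖g x‖ ∂ν := by
  have hμ : μ ≪ μ + ν := Measure.AbsolutelyContinuous.rfl.add_right ν
  have hν : ν ≪ μ + ν := by
    rw [add_comm]; exact Measure.AbsolutelyContinuous.rfl.add_right μ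
  have integral_norm_eq {κ : Measure α} [SigmaFinite κ] (hκ : κ ≪ μ + ν) (k : α → E) :
      ∫ x, ‖k x‖ ∂κ = ∫ x, ‖(κ.rnDeriv (μ + ν) x).toReal • k x‖ ∂(μ + ν) := by
    simp_rw [norm_smul, Real.norm_of_nonneg ENNReal.toReal_nonneg, ← smul_eq_mul]
    exact (integral_rnDeriv_smul hκ).symm
  -- `f μ` and `g ν` are the same vector measure, so their densities with respect to `μ + ν` agree
  have hdens : (fun x => (μ.rnDeriv (μ + ν) x).toReal • f x)
      =ᵐ[μ + ν] fun x => (ν.rnDeriv (μ + ν) x).toReal • g x :=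
    ae_eq_of_forall_setIntegral_eq_of_sigmaFinite
      (fun _ _ _ => ((integrable_rnDeriv_smul_iff hμ).2 hf).integrableOn)
      (fun _ _ _ => ((integrable_rnDeriv_smul_iff hν).2 hg).integrableOn)
      fun s hs _ => by rw [setIntegral_rnDeriv_smul hμ hs, setIntegral_rnDeriv_smul hν hs, h s hs]
  rw [integral_norm_eq hμ, integral_norm_eq hν]
  exact integral_congr_ae (hdens.fun_comp norm)

theorem MeasureTheory.Measure.MutuallySingular.integral_norm_eq_add_of_forall_setIntegral_eq
    {μ ν₁ ν₂ : Measure α} [SigmaFinite μ] [SigmaFinite ν₁] [SigmaFinite ν₂] (hν : ν₁ ⟂ₘ ν₂)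
    {f g₁ g₂ : α → E} (hf : Integrable f μ) (hg₁ : Integrable g₁ ν₁) (hg₂ : Integrable g₂ ν₂)
    (h : ∀ s, MeasurableSet s →
      ∫ x in s, f x ∂μ = ∫ x in s, g₁ x ∂ν₁ + ∫ x in s, g₂ x ∂ν₂) :
    ∫ x, ‖f x‖ ∂μ = ∫ x, ‖g₁ x‖ ∂ν₁ + ∫ x, ‖g₂ x‖ ∂ν₂ := by
  classical
  set g := hν.nullSet.piecewise g₂ g₁
  have hg₁' : g =ᵐ[ν₁] g₁ := by
    filter_upwards [measure_eq_zero_iff_ae_notMem.1 hν.measure_nullSet] with x hx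
    simp [g, hx]
  have hg₂' : g =ᵐ[ν₂] g₂ := by
    filter_upwards [measure_eq_zero_iff_ae_notMem.1 hν.measure_compl_nullSet] with x hx
    simp_all [g]
  have hgν₁ : Integrable g ν₁ := hg₁.congr hg₁'.symm
  have hgν₂ : Integrable g ν₂ := hg₂.congr hg₂'.symm
  have hg : Integrable g (ν₁ + ν₂) := hgν₁.add_measure hgν₂
  rw [integral_norm_eq_of_forall_setIntegral_eq hf hg fun s hs => ?_,
    integral_add_measure hgν₁.norm hgν₂.norm]
  · exact congr_arg₂ (· + ·) (integral_congr_ae (hg₁'.fun_comp norm))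
      (integral_congr_ae (hg₂'.fun_comp norm))
  rw [h s hs, Measure.restrict_add, integral_add_measure hgν₁.integrableOn hgν₂.integrableOn,
    integral_congr_ae (ae_restrict_of_ae hg₁'), integral_congr_ae (ae_restrict_of_ae hg₂')]

end VectorMeasureDensity

section PolarDecomposition

variable {α E : Type*} [MeasurableSpace α] [NormedAddCommGroup E] [InnerProductSpace ℝ E]

theorem HasDerivAt.norm {f : ℝ → E} {f' : E} {x : ℝ} (hf : HasDerivAt f f' x)
    (h0 : f x ≠ 0) : HasDerivAt (fun y => ‖f y‖) (⟪f x, f'⟫_ℝ / ‖f x‖) x := by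
  have := hf.norm_sq.sqrt (by positivity)
  simp only [Real.sqrt_sq (norm_nonneg _)] at this
  convert this using 1
  field_simp

theorem measure_univ_toReal_eq_integral_norm_add_abs_mul [CompleteSpace E] {μ μ₀ ν : Measure α}
    [IsFiniteMeasure μ] [IsFiniteMeasure μ₀] [IsFiniteMeasure ν] (hsing : ν ⟂ₘ μ₀)
    {n n₀ a nₛ : α → E} (hn : ∀ᵐ x ∂μ, ‖n x‖ = 1) (hnₛ : ∀ᵐ x ∂ν, ‖nₛ x‖ = 1)
    (hn_int : Integrable n μ) (hn₀_int : Integrable n₀ μ₀) (ha_int : Integrable a μ₀)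
    (hnₛ_int : Integrable nₛ ν) (ε : ℝ)
    (h : ∀ s, MeasurableSet s → ∫ x in s, n x ∂μ =
      ∫ x in s, n₀ x ∂μ₀ + ε • (∫ x in s, a x ∂μ₀ + ∫ x in s, nₛ x ∂ν)) :
    (μ univ).toReal = ∫ x, ‖n₀ x + ε • a x‖ ∂μ₀ + |ε| * (ν univ).toReal := by
  have key := hsing.symm.integral_norm_eq_add_of_forall_setIntegral_eq hn_int
    (g₁ := fun x => n₀ x + ε • a x) (g₂ := fun x => ε • nₛ x)
    (hn₀_int.add (ha_int.smul ε)) (hnₛ_int.smul ε) fun s hs => by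
      rw [h s hs, smul_add, integral_add (g := fun x => ε • a x) hn₀_int.integrableOn
        (ha_int.smul ε).integrableOn, integral_smul, integral_smul, add_assoc]
  rw [integral_congr_ae (hn.mono fun x hx => hx), integral_congr_ae
    (hnₛ.mono fun x hx => by rw [norm_smul, hx, mul_one, Real.norm_eq_abs])] at key
  simpa [measureReal_def, mul_comm] using key

theorem hasDerivAt_integral_norm_add_smul {μ : Measure α} {n a : α → E}
    (hn : ∀ᵐ x ∂μ, ‖n x‖ = 1) (hn_int : Integrable n μ) (ha_int : Integrable a μ) :
    HasDerivAt (fun ε : ℝ => ∫ x, ‖n x + ε • a x‖ ∂μ) (∫ x, ⟪n x, a x⟫_ℝ ∂μ) 0 := by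
  have hlip : ∀ᵐ x ∂μ,
      LipschitzOnWith (Real.nnabs ‖a x‖) (fun ε : ℝ => ‖n x + ε • a x‖) (Metric.ball 0 1) :=
    ae_of_all _ fun x => (LipschitzWith.of_dist_le_mul fun s t => by
      simpa [Real.dist_eq, ← sub_smul, norm_smul, mul_comm] using
        abs_norm_sub_norm_le (n x + s • a x) (n x + t • a x)).lipschitzOnWith
  have hderiv : ∀ᵐ x ∂μ, HasDerivAt (fun ε : ℝ => ‖n x + ε • a x‖) ⟪n x, a x⟫_ℝ 0 :=
    hn.mono fun x hx => by
      simpa [hx] using (((hasDerivAt_id (0 : ℝ)).smul_const (a x)).const_add (n x)).norm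
        (by simp [← norm_ne_zero_iff, hx])
  exact (hasDerivAt_integral_of_dominated_loc_of_lip (F := fun (ε : ℝ) x => ‖n x + ε • a x‖)
    (F' := fun x => ⟪n x, a x⟫_ℝ) (Metric.ball_mem_nhds 0 one_pos)
    (.of_forall fun ε => (hn_int.add (ha_int.smul ε)).aestronglyMeasurable.norm)
    (by simpa using hn_int.norm) (hn_int.aestronglyMeasurable.inner ha_int.aestronglyMeasurable)
    hlip ha_int.norm hderiv).2

end PolarDecomposition

theorem integral_mul_add_const_mul {α : Type*} [MeasurableSpace α] {μ : Measure α}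
    {h f g : α → ℝ} (hf : Integrable (fun x => h x * f x) μ)
    (hg : Integrable (fun x => h x * g x) μ) (c : ℝ) :
    ∫ x, h x * (f x + c * g x) ∂μ = ∫ x, h x * f x ∂μ + c * ∫ x, h x * g x ∂μ := by
  simp_rw [mul_add, mul_left_comm _ c]
  rw [integral_add hf (hg.const_mul c), integral_const_mul]

theorem hasDerivWithinAt_abs_Ici_zero : HasDerivWithinAt (fun x : ℝ => |x|) 1 (Ici 0) 0 :=
  (hasDerivWithinAt_id 0 _).congr (fun _ hx => abs_of_nonneg hx) abs_zero

theorem hasDerivWithinAt_abs_Iic_zero : HasDerivWithinAt (fun x : ℝ => |x|) (-1) (Iic 0) 0 :=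
  (hasDerivWithinAt_id 0 _).neg.congr (fun _ hx => abs_of_nonpos hx) (by simp)

theorem IsLocalMinOn.hasDerivWithinAt_Ici_nonneg {f : ℝ → ℝ} {f' a : ℝ}
    (hmin : IsLocalMinOn f (Ici a) a) (hf : HasDerivWithinAt f f' (Ici a) a) : 0 ≤ f' := by
  simpa using hmin.hasFDerivWithinAt_nonneg hf.hasFDerivWithinAt (y := 1)
    (mem_posTangentConeAt_of_segment_subset (by simp [segment_eq_Icc, Icc_subset_Ici_self]))

theorem IsLocalMinOn.hasDerivWithinAt_Iic_nonpos {f : ℝ → ℝ} {f' a : ℝ}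
    (hmin : IsLocalMinOn f (Iic a) a) (hf : HasDerivWithinAt f f' (Iic a) a) : f' ≤ 0 := by
  simpa using hmin.hasFDerivWithinAt_nonneg hf.hasFDerivWithinAt (y := -1)
    (mem_posTangentConeAt_of_segment_subset (by simp [segment_eq_Icc', Icc_subset_Iic_self]))

theorem first_variation_inequalities_at_BV_minimizer_general
    {m k : ℕ} (Ω : Set (EuclideanSpace ℝ (Fin m)))
    (hopen : IsOpen Ω)
    (F : EuclideanSpace ℝ (Fin m) → EuclideanSpace ℝ (Fin m))
    -- `H ∈ L^∞(Ω)`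
    (Hf : EuclideanSpace ℝ (Fin m) → ℝ)
    (hHmeas : AEStronglyMeasurable Hf (volume.restrict Ω))
    (hHbdd : ∃ C : ℝ, ∀ x ∈ Ω, |Hf x| ≤ C)
    -- `u ∈ BV(Ω)`
    (u : EuclideanSpace ℝ (Fin m) → ℝ)
    (huint : IntegrableOn u Ω)
    -- `u` is a minimizer for `F̃_H` (Definition 1.2)
    (hmin : ∀ w : EuclideanSpace ℝ (Fin m) → ℝ, IntegrableOn w Ω →
      tvF Ω (fun _ => 0) w ≠ ⊤ →
      tvF Set.univ (fun _ => 0) (Set.indicator Ω w) = tvF Ω (fun _ => 0) w →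
      tvF Ω F (fun x => u x + w x) ≠ ⊤ →
      (tvF Ω F u).toReal + ∫ x in Ω, Hf x * u x ≤
        (tvF Ω F (fun x => u x + w x)).toReal + ∫ x in Ω, Hf x * (u x + w x))
    -- `φ ∈ BV(Ω)` with zero trace
    (φ : EuclideanSpace ℝ (Fin m) → ℝ)
    (hφint : IntegrableOn φ Ω) (hφBV : tvF Ω (fun _ => 0) φ ≠ ⊤)
    (hφtrace : tvF Set.univ (fun _ => 0) (Set.indicator Ω φ) = tvF Ω (fun _ => 0) φ)
    -- polar / Radon–Nikodym data for `dμ_ε = (Du + F d^m x) + ε Dφ` and `dν = Dφ`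
    (μtv : ℝ → Measure (EuclideanSpace ℝ (Fin m)))
    (N A : ℝ → EuclideanSpace ℝ (Fin m) → EuclideanSpace ℝ (Fin k))
    (νtv : Measure (EuclideanSpace ℝ (Fin m)))
    (Nν : EuclideanSpace ℝ (Fin m) → EuclideanSpace ℝ (Fin k))
    (νstv : ℝ → Measure (EuclideanSpace ℝ (Fin m)))
    (Ns : ℝ → EuclideanSpace ℝ (Fin m) → EuclideanSpace ℝ (Fin k))
    (hμfin : ∀ ε, IsFiniteMeasure (μtv ε))
    (hνsfin : ∀ ε, IsFiniteMeasure (νstv ε))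
    (hN1 : ∀ ε, ∀ᵐ x ∂(μtv ε), ‖N ε x‖ = 1)
    (hNs1 : ∀ ε, ∀ᵐ x ∂(νstv ε), ‖Ns ε x‖ = 1)
    (hNint : ∀ ε, Integrable (N ε) (μtv ε))
    (hAint : ∀ ε, Integrable (A ε) (μtv ε))
    (hNsint : ∀ ε, Integrable (Ns ε) (νstv ε))
    (hsing : ∀ ε, (νstv ε).MutuallySingular (μtv ε))
    (hadd : ∀ ε : ℝ, ∀ S : Set (EuclideanSpace ℝ (Fin m)), MeasurableSet S →
      ∫ x in S, N ε x ∂(μtv ε) = (∫ x in S, N 0 x ∂(μtv 0)) + ε • ∫ x in S, Nν x ∂νtv)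
    (hRN : ∀ ε : ℝ, ∀ S : Set (EuclideanSpace ℝ (Fin m)), MeasurableSet S →
      ∫ x in S, Nν x ∂νtv = (∫ x in S, A ε x ∂(μtv ε)) + ∫ x in S, Ns ε x ∂(νstv ε))
    -- links with the functional: `|dμ_ε|(X) = ∫_Ω |D(u+εφ) + F d^m x|`, `|dν|(X) = ∫_Ω |Dφ|`
    (hlink : ∀ ε : ℝ, μtv ε Set.univ = tvF Ω F (fun x => u x + ε * φ x)) :
    (HasDerivWithinAt
        (fun ε : ℝ => (μtv ε Set.univ).toReal + ∫ x in Ω, Hf x * (u x + ε * φ x))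
        ((∫ x, ⟪N 0 x, A 0 x⟫_ℝ ∂(μtv 0)) + (νstv 0 Set.univ).toReal +
          ∫ x in Ω, Hf x * φ x) (Set.Ici 0) 0 ∧
      0 ≤ (∫ x, ⟪N 0 x, A 0 x⟫_ℝ ∂(μtv 0)) + (νstv 0 Set.univ).toReal +
          ∫ x in Ω, Hf x * φ x) ∧
    (HasDerivWithinAt
        (fun ε : ℝ => (μtv ε Set.univ).toReal + ∫ x in Ω, Hf x * (u x + ε * φ x))
        ((∫ x, ⟪N 0 x, A 0 x⟫_ℝ ∂(μtv 0)) - (νstv 0 Set.univ).toReal +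
          ∫ x in Ω, Hf x * φ x) (Set.Iic 0) 0 ∧
      (∫ x, ⟪N 0 x, A 0 x⟫_ℝ ∂(μtv 0)) - (νstv 0 Set.univ).toReal +
          ∫ x in Ω, Hf x * φ x ≤ 0) := by
  have := hμfin 0
  have := hνsfin 0
  obtain ⟨C, hC⟩ := hHbdd
  have hHΩ : ∀ᵐ x ∂volume.restrict Ω, ‖Hf x‖ ≤ C :=
    ae_restrict_of_forall_mem hopen.measurableSet hC
  have hΦ : (fun ε : ℝ => (μtv ε univ).toReal + ∫ x in Ω, Hf x * (u x + ε * φ x)) =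
      fun ε => ∫ x, ‖N 0 x + ε • A 0 x‖ ∂(μtv 0) + |ε| * (νstv 0 univ).toReal +
        ((∫ x in Ω, Hf x * u x) + ε * ∫ x in Ω, Hf x * φ x) := by
    funext ε
    have := hμfin ε
    rw [measure_univ_toReal_eq_integral_norm_add_abs_mul (hsing 0) (hN1 ε) (hNs1 0) (hNint ε)
        (hNint 0) (hAint 0) (hNsint 0) ε fun s hs => by rw [hadd ε s hs, hRN 0 s hs],
      integral_mul_add_const_mul (huint.bdd_mul hHmeas hHΩ) (hφint.bdd_mul hHmeas hHΩ)]
  have hminΦ : IsMinOn (fun ε : ℝ => (μtv ε univ).toReal + ∫ x in Ω, Hf x * (u x + ε * φ x))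
      univ 0 := fun ε _ => by
    have hfin : tvF Ω F (fun x => u x + ε * φ x) ≠ ⊤ := by
      rw [← hlink ε]; exact (hμfin ε).measure_univ_lt_top.ne
    simpa [hlink] using IsTVMinimizer.le_add_const_mul hmin hφint hφBV hφtrace ε hfin
  have hnorm := hasDerivAt_integral_norm_add_smul (hN1 0) (hNint 0) (hAint 0)
  have hlin : HasDerivAt (fun ε : ℝ => (∫ x in Ω, Hf x * u x) + ε * ∫ x in Ω, Hf x * φ x)
      (∫ x in Ω, Hf x * φ x) 0 := (hasDerivAt_mul_const _).const_add _
  have hright := (hnorm.hasDerivWithinAt.add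
    (hasDerivWithinAt_abs_Ici_zero.mul_const (νstv 0 univ).toReal)).add hlin.hasDerivWithinAt
  have hleft := (hnorm.hasDerivWithinAt.add
    (hasDerivWithinAt_abs_Iic_zero.mul_const (νstv 0 univ).toReal)).add hlin.hasDerivWithinAt
  simp only [one_mul, neg_one_mul, ← sub_eq_add_neg] at hright hleft
  rw [hΦ] at hminΦ ⊢
  exact ⟨⟨hright, (hminΦ.on_subset (subset_univ _)).localize.hasDerivWithinAt_Ici_nonneg hright⟩,
    hleft, (hminΦ.on_subset (subset_univ _)).localize.hasDerivWithinAt_Iic_nonpos hleft⟩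

/-- **Corollary B′: necessary first-variation conditions at a BV minimizer.**
Let `Ω ⊂ ℝ^m` be a bounded domain with Lipschitz boundary (uniform cone condition),
`F ∈ L¹(Ω; ℝ^m)`, `H ∈ L^∞(Ω)`, and let `u ∈ BV(Ω)` be a minimizer of
`F̃_H(v) = ∫_Ω |Dv + F d^m x| + ∫_Ω H v` among competitors `u + w` with `w ∈ BV(Ω)`
of zero trace (zero trace of `w` is encoded by `|D(w·1_Ω)|(ℝ^m) = |Dw|(Ω)`).
Let `φ ∈ BV(Ω)` have zero trace, let `dμ := Du + F d^m x`, `dν := Dφ`, and let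
`μtv ε`, `N ε`, `A ε`, `νstv ε`, `Ns ε` encode the polar/Radon–Nikodym decompositions
`dμ_ε = N_ε |dμ_ε|` (`dμ_ε := dμ + ε dν`), `dν = A_ε |dμ_ε| + dν_s^ε`,
`dν_s^ε ⊥ |dμ_ε|`, linked to the functional by `|dμ_ε|(X) = ∫_Ω |D(u+εφ) + F d^m x|`.
Then `F̃_H′(0+) = ∫ N₀·A₀ |dμ| + ∫ |dν_s⁰| + ∫_Ω Hφ ≥ 0` and
`F̃_H′(0−) = ∫ N₀·A₀ |dμ| − ∫ |dν_s⁰| + ∫_Ω Hφ ≤ 0`. -/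
theorem first_variation_inequalities_at_BV_minimizer
    {m k : ℕ} (Ω : Set (EuclideanSpace ℝ (Fin m)))
    (hopen : IsOpen Ω) (hconn : IsConnected Ω) (hbdd : IsBounded Ω)
    -- Lipschitz regular boundary: uniform interior cone condition
    (hlip : ∃ r δ : ℝ, 0 < r ∧ 0 < δ ∧ ∀ p ∈ frontier Ω,
      ∃ e : EuclideanSpace ℝ (Fin m), ‖e‖ = 1 ∧
        ∀ x ∈ closure Ω ∩ Metric.ball p r, ∀ t : ℝ, 0 < t → t < r →
          Metric.ball (x + t • e) (δ * t) ⊆ Ω)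
    (F : EuclideanSpace ℝ (Fin m) → EuclideanSpace ℝ (Fin m))
    (hFint : IntegrableOn F Ω)
    -- `H ∈ L^∞(Ω)`
    (Hf : EuclideanSpace ℝ (Fin m) → ℝ)
    (hHmeas : AEStronglyMeasurable Hf (volume.restrict Ω))
    (hHbdd : ∃ C : ℝ, ∀ x ∈ Ω, |Hf x| ≤ C)
    -- `u ∈ BV(Ω)`
    (u : EuclideanSpace ℝ (Fin m) → ℝ)
    (huint : IntegrableOn u Ω) (huBV : tvF Ω (fun _ => 0) u ≠ ⊤)
    (huF : tvF Ω F u ≠ ⊤)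
    -- `u` is a minimizer for `F̃_H` (Definition 1.2)
    (hmin : ∀ w : EuclideanSpace ℝ (Fin m) → ℝ, IntegrableOn w Ω →
      tvF Ω (fun _ => 0) w ≠ ⊤ →
      tvF Set.univ (fun _ => 0) (Set.indicator Ω w) = tvF Ω (fun _ => 0) w →
      tvF Ω F (fun x => u x + w x) ≠ ⊤ →
      (tvF Ω F u).toReal + ∫ x in Ω, Hf x * u x ≤
        (tvF Ω F (fun x => u x + w x)).toReal + ∫ x in Ω, Hf x * (u x + w x))
    -- `φ ∈ BV(Ω)` with zero trace
    (φ : EuclideanSpace ℝ (Fin m) → ℝ)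
    (hφint : IntegrableOn φ Ω) (hφBV : tvF Ω (fun _ => 0) φ ≠ ⊤)
    (hφtrace : tvF Set.univ (fun _ => 0) (Set.indicator Ω φ) = tvF Ω (fun _ => 0) φ)
    -- polar / Radon–Nikodym data for `dμ_ε = (Du + F d^m x) + ε Dφ` and `dν = Dφ`
    (μtv : ℝ → Measure (EuclideanSpace ℝ (Fin m)))
    (N A : ℝ → EuclideanSpace ℝ (Fin m) → EuclideanSpace ℝ (Fin k))
    (νtv : Measure (EuclideanSpace ℝ (Fin m)))
    (Nν : EuclideanSpace ℝ (Fin m) → EuclideanSpace ℝ (Fin k))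
    (νstv : ℝ → Measure (EuclideanSpace ℝ (Fin m)))
    (Ns : ℝ → EuclideanSpace ℝ (Fin m) → EuclideanSpace ℝ (Fin k))
    (hμfin : ∀ ε, IsFiniteMeasure (μtv ε))
    (hνfin : IsFiniteMeasure νtv)
    (hνsfin : ∀ ε, IsFiniteMeasure (νstv ε))
    (hN1 : ∀ ε, ∀ᵐ x ∂(μtv ε), ‖N ε x‖ = 1)
    (hNν1 : ∀ᵐ x ∂νtv, ‖Nν x‖ = 1)
    (hNs1 : ∀ ε, ∀ᵐ x ∂(νstv ε), ‖Ns ε x‖ = 1)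
    (hNint : ∀ ε, Integrable (N ε) (μtv ε))
    (hAint : ∀ ε, Integrable (A ε) (μtv ε))
    (hNνint : Integrable Nν νtv)
    (hNsint : ∀ ε, Integrable (Ns ε) (νstv ε))
    (hsing : ∀ ε, (νstv ε).MutuallySingular (μtv ε))
    (hadd : ∀ ε : ℝ, ∀ S : Set (EuclideanSpace ℝ (Fin m)), MeasurableSet S →
      ∫ x in S, N ε x ∂(μtv ε) = (∫ x in S, N 0 x ∂(μtv 0)) + ε • ∫ x in S, Nν x ∂νtv)
    (hRN : ∀ ε : ℝ, ∀ S : Set (EuclideanSpace ℝ (Fin m)), MeasurableSet S →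
      ∫ x in S, Nν x ∂νtv = (∫ x in S, A ε x ∂(μtv ε)) + ∫ x in S, Ns ε x ∂(νstv ε))
    -- links with the functional: `|dμ_ε|(X) = ∫_Ω |D(u+εφ) + F d^m x|`, `|dν|(X) = ∫_Ω |Dφ|`
    (hlink : ∀ ε : ℝ, μtv ε Set.univ = tvF Ω F (fun x => u x + ε * φ x))
    (hνlink : νtv Set.univ = tvF Ω (fun _ => 0) φ) :
    (HasDerivWithinAt
        (fun ε : ℝ => (μtv ε Set.univ).toReal + ∫ x in Ω, Hf x * (u x + ε * φ x))
        ((∫ x, ⟪N 0 x, A 0 x⟫_ℝ ∂(μtv 0)) + (νstv 0 Set.univ).toReal +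
          ∫ x in Ω, Hf x * φ x) (Set.Ici 0) 0 ∧
      0 ≤ (∫ x, ⟪N 0 x, A 0 x⟫_ℝ ∂(μtv 0)) + (νstv 0 Set.univ).toReal +
          ∫ x in Ω, Hf x * φ x) ∧
    (HasDerivWithinAt
        (fun ε : ℝ => (μtv ε Set.univ).toReal + ∫ x in Ω, Hf x * (u x + ε * φ x))
        ((∫ x, ⟪N 0 x, A 0 x⟫_ℝ ∂(μtv 0)) - (νstv 0 Set.univ).toReal +
          ∫ x in Ω, Hf x * φ x) (Set.Iic 0) 0 ∧
      (∫ x, ⟪N 0 x, A 0 x⟫_ℝ ∂(μtv 0)) - (νstv 0 Set.univ).toReal +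
          ∫ x in Ω, Hf x * φ x ≤ 0) :=
  first_variation_inequalities_at_BV_minimizer_general Ω hopen F Hf hHmeas hHbdd u huint hmin φ
    hφint hφBV hφtrace μtv N A νtv Nν νstv Ns hμfin hνsfin hN1 hNs1 hNint hAint hNsint hsing hadd
    hRN hlink

end
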